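/- arXiv:2603.07274 — 3 statements merged into one kernel-verified Lean document; each statement's English description precedes it below -/
import Mathlib

section
/- Let q ≥ 2 and Q ≥ 1 be integers with q ∤ Q. Let X be uniform on 𝒞_Q = {0, 1, ..., Q−1} and Y = X mod q ∈ ℤ_q. Then the statistical distance Δ(Y, 𝒰(ℤ_q)) between Y and the uniform distribution on ℤ_q satisfies 0 < Δ(Y, 𝒰(ℤ_q)) ≤ q/(4Q). -/
/-- If `q ∤ Q`, the statistical distance between `Y = X mod q`
(for `X` uniform on `{0, ..., Q-1}`) and the uniform distribution on `ℤ_q`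
satisfies `0 < Δ ≤ q/(4Q)`. -/
theorem stat_dist_mod_bound (q Q : ℕ) (hq : 2 ≤ q) (hQ : 1 ≤ Q) (hndvd : ¬ q ∣ Q) :
    haveI : NeZero q := ⟨by omega⟩
    0 < (1 / 2 : ℝ) * ∑ a : ZMod q,
        |(((Finset.range Q).filter (fun x => ((x : ℕ) : ZMod q) = a)).card : ℝ) / Q
          - 1 / q| ∧
    (1 / 2 : ℝ) * ∑ a : ZMod q,
        |(((Finset.range Q).filter (fun x => ((x : ℕ) : ZMod q) = a)).card : ℝ) / Q
          - 1 / q| ≤ (q : ℝ) / (4 * Q) := by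
  haveI : NeZero q := ⟨by omega⟩
  have hq0 : 0 < q := by omega
  set k := Q / q with hk
  set r := Q % q with hr
  have hQkr : q * k + r = Q := Nat.div_add_mod Q q
  have hr0 : 0 < r :=
    Nat.pos_of_ne_zero (fun h => hndvd (Nat.dvd_of_mod_eq_zero (hr ▸ h)))
  have hrq : r < q := Nat.mod_lt Q hq0
  -- card formula
  have hcard : ∀ a : ZMod q,
      ((Finset.range Q).filter (fun x => ((x : ℕ) : ZMod q) = a)).card
        = k + if a.val < r then 1 else 0 := by
    intro a
    have h1 : ∀ x : ℕ, ((x:ZMod q) = a) ↔ x ≡ a.val [MOD q] := by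
      intro x
      rw [← ZMod.natCast_eq_natCast_iff, ZMod.natCast_val, ZMod.cast_id]
    simp only [h1]
    rw [← Nat.count_eq_card_filter_range, Nat.count_modEq_card _ hq0,
      Nat.mod_eq_of_lt (ZMod.val_lt a)]
  -- the summand as a function of val
  have hqR : (0:ℝ) < q := by exact_mod_cast hq0
  have hQR : (0:ℝ) < Q := by exact_mod_cast hQ
  have hrR : (0:ℝ) < r := by exact_mod_cast hr0
  have hrqR : (r:ℝ) < q := by exact_mod_cast hrq
  have hQeq : (Q:ℝ) = q * k + r := by exact_mod_cast hQkr.symm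
  have hsummand : ∀ a : ZMod q,
      |(((Finset.range Q).filter (fun x => ((x : ℕ) : ZMod q) = a)).card : ℝ) / Q - 1 / q|
        = if a.val < r then ((q:ℝ) - r) / (q * Q) else (r:ℝ) / (q * Q) := by
    intro a
    rw [hcard a]
    split_ifs with h
    · push_cast
      rw [abs_of_nonneg]
      · field_simp
        rw [hQeq]; ring
      · rw [sub_nonneg, div_le_div_iff₀ hqR hQR, hQeq]
        nlinarith
    · push_cast
      rw [abs_of_nonpos, neg_sub]
      · field_simp
        rw [hQeq]; ring
      · rw [sub_nonpos, div_le_div_iff₀ hQR hqR, hQeq]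
        nlinarith
  rw [Finset.sum_congr rfl (fun a _ => hsummand a)]
  -- convert to a sum over range q
  have hbij : ∑ a : ZMod q, (if a.val < r then ((q:ℝ) - r) / (q * Q) else (r:ℝ) / (q * Q))
      = ∑ v ∈ Finset.range q, (if v < r then ((q:ℝ) - r) / (q * Q) else (r:ℝ) / (q * Q)) := by
    exact Finset.sum_nbij' (fun a => a.val) (fun v => (v : ZMod q))
      (fun a _ => Finset.mem_range.mpr (ZMod.val_lt a))
      (fun v _ => Finset.mem_univ _)
      (fun a _ => ZMod.natCast_rightInverse a)
      (fun v hv => ZMod.val_cast_of_lt (Finset.mem_range.mp hv))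
      (fun a _ => rfl)
  rw [hbij]
  have hsplit : ∑ v ∈ Finset.range q, (if v < r then ((q:ℝ) - r) / (q * Q) else (r:ℝ) / (q * Q))
      = r * (((q:ℝ) - r) / (q * Q)) + ((q:ℕ) - (r:ℕ) : ℕ) * ((r:ℝ) / (q * Q)) := by
    rw [Finset.sum_ite, Finset.sum_const, Finset.sum_const]
    have h1 : (Finset.range q).filter (fun v => v < r) = Finset.range r := by
      ext v; simp only [Finset.mem_filter, Finset.mem_range]; omega
    have h2 : ((Finset.range q).filter (fun v => ¬ v < r)).card = q - r := by
      have : (Finset.range q).filter (fun v => ¬ v < r) = Finset.Ico r q := by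
        ext v; simp only [Finset.mem_filter, Finset.mem_range, Finset.mem_Ico]; omega
      rw [this, Nat.card_Ico]
    rw [h1, h2, Finset.card_range]
    push_cast
    ring
  rw [hsplit]
  have hcast : (((q:ℕ) - (r:ℕ) : ℕ) : ℝ) = (q:ℝ) - r := by
    push_cast [Nat.cast_sub hrq.le]; ring
  rw [hcast]
  constructor
  · have : (0:ℝ) < ((q:ℝ) - r) := by linarith
    positivity
  · have heq : (1:ℝ)/2 * ((r:ℝ) * (((q:ℝ) - r) / (q * Q)) + ((q:ℝ) - r) * ((r:ℝ) / (q * Q)))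
        = (r:ℝ) * ((q:ℝ) - r) / (q * Q) := by field_simp; ring
    rw [heq, div_le_div_iff₀ (by positivity) (by positivity)]
    nlinarith [sq_nonneg ((q:ℝ) - 2 * r)]
end

section
/- (Siegel's Lemma) Let n < m be positive integers, M a positive integer, and A ∈ ℤ^{n×m} a matrix with all entries bounded in absolute value by M. Then the linear system Ax = 0 has a non-zero integer solution x ∈ ℤ^m with max_{1 ≤ i ≤ m} |x_i| ≤ ⌊(mM)^{n/(m−n)}⌋. -/
/-- Siegel's Lemma: For `n < m` and `A ∈ ℤ^{n×m}` with entries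
bounded in absolute value by `M`, the system `Ax = 0` has a nonzero integer
solution with `max_i |x_i| ≤ ⌊(mM)^{n/(m-n)}⌋`. -/
theorem siegel_lemma (n m M : ℕ) (hn : 0 < n) (hM : 0 < M) (hnm : n < m)
    (A : Matrix (Fin n) (Fin m) ℤ) (hA : ∀ i j, |A i j| ≤ (M : ℤ)) :
    ∃ x : Fin m → ℤ, x ≠ 0 ∧ A.mulVec x = 0 ∧
      ∀ i, |x i| ≤ ⌊((m : ℝ) * (M : ℝ)) ^ ((n : ℝ) / ((m : ℝ) - (n : ℝ)))⌋ := by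
  letI := Matrix.seminormedAddCommGroup (m := Fin n) (n := Fin m) (α := ℤ)
  obtain ⟨t, ht0, htA, htle⟩ := Int.Matrix.exists_ne_zero_int_vec_norm_le A
    (by simpa using hnm) (by simpa using hn)
  refine ⟨t, ht0, htA, fun i ↦ ?_⟩
  rw [Int.le_floor]
  have h1 : ((|t i| : ℤ) : ℝ) ≤ ‖t‖ := by
    push_cast
    rw [← Int.norm_eq_abs]
    exact norm_le_pi_norm t i
  refine h1.trans (htle.trans ?_)
  have hM1 : (1 : ℝ) ≤ (M : ℝ) := by exact_mod_cast hM
  have hAM : max 1 ‖A‖ ≤ (M : ℝ) := by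
    refine max_le hM1 ?_
    rw [Matrix.norm_le_iff (by positivity)]
    intro i j
    rw [Int.norm_eq_abs, ← Int.cast_abs]
    exact_mod_cast hA i j
  have hcard : (Fintype.card (Fin n) : ℝ) = n := by simp
  have hcard' : (Fintype.card (Fin m) : ℝ) = m := by simp
  rw [hcard, hcard']
  have hm1 : (1 : ℝ) ≤ m := by exact_mod_cast hnm.le.trans' (Nat.one_le_iff_ne_zero.mpr hn.ne')
  refine Real.rpow_le_rpow (by positivity) (mul_le_mul_of_nonneg_left hAM (by positivity)) ?_
  have : (n:ℝ) ≤ m := by exact_mod_cast hnm.le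
  exact div_nonneg (by positivity) (by linarith)
end

section
/- Let n, m, Q, M be positive integers with Q ≥ n√m·M, let B be an invertible n×n integer matrix with all entries bounded in absolute value by M, let y_1, ..., y_m ∈ P(B), let a_j = ⌊Q B^{-1} y_j⌋ for each j, and let A be the n×m matrix with columns a_1, ..., a_m. Suppose r = (r_1, ..., r_m) ∈ ℤ^m satisfies Ar = 0 and max_j |r_j| ≤ β. Then for any x_1, ..., x_m ∈ ℝ^n with y_j − x_j well-defined, setting v = Σ_{j=1}^m r_j (y_j − x_j) and z_j = (1/Q) B a_j, one has Σ_{j=1}^m r_j z_j = 0 and ‖v‖ ≤ ‖Σ_{j=1}^m r_j x_j‖ + β · m n√n · M / Q ≤ ‖Σ_{j=1}^m r_j x_j‖ + β √(nm), where ‖·‖ is the Euclidean norm. -/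
/-- Euclidean norm of a real vector. -/
noncomputable def euclNorm {n : ℕ} (v : Fin n → ℝ) : ℝ := Real.sqrt (∑ i, (v i) ^ 2)

/-! Because `A r = 0`, the rounded points `z_j = Q⁻¹ B a_j` satisfy `∑ r_j z_j = 0`, so
`∑ r_j (y_j - x_j) = ∑ r_j (y_j - z_j) - ∑ r_j x_j`. Writing `y_j = B t_j`, the rounding error
`y_j - z_j = B (t_j - Q⁻¹ ⌊Q t_j⌋)` has coordinates at most `n M / Q`, hence Euclidean norm at most
`n √n M / Q`; weighting by `|r_j| ≤ β` and summing gives the first bound, and `n √m M ≤ Q` turns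
`β m n √n M / Q` into `β √(n m)`. -/

open Matrix

theorem euclNorm_eq_norm_toLp {n : ℕ} (v : Fin n → ℝ) : euclNorm v = ‖WithLp.toLp 2 v‖ := by
  simp [euclNorm, EuclideanSpace.norm_eq]

theorem euclNorm_le_sqrt_mul {n : ℕ} {v : Fin n → ℝ} {c : ℝ} (hv : ∀ i, |v i| ≤ c) :
    euclNorm v ≤ √n * c := by
  obtain rfl | hn := n.eq_zero_or_pos
  · simp [euclNorm]
  have hc : 0 ≤ c := (abs_nonneg _).trans (hv ⟨0, hn⟩)
  calc euclNorm v ≤ √(∑ _i : Fin n, c ^ 2) := by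
        refine Real.sqrt_le_sqrt (Finset.sum_le_sum fun i _ => ?_)
        exact sq_le_sq' (abs_le.mp (hv i)).1 (abs_le.mp (hv i)).2
    _ = √n * c := by simp [Real.sqrt_mul, hc]

theorem abs_sub_floor_mul_div_le {q : ℝ} (hq : 0 < q) (t : ℝ) : |t - ⌊q * t⌋ / q| ≤ q⁻¹ := by
  have hfract : t - ⌊q * t⌋ / q = Int.fract (q * t) / q := by
    rw [Int.fract, sub_div, mul_div_cancel_left₀ t hq.ne']
  rw [hfract, abs_div, abs_of_pos hq, abs_of_nonneg (Int.fract_nonneg _), div_eq_mul_inv]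
  exact mul_le_of_le_one_left (inv_nonneg.mpr hq.le) (Int.fract_lt_one _).le

theorem Matrix.abs_mulVec_apply_le {ι κ : Type*} [Fintype κ] {B : Matrix ι κ ℝ} {w : κ → ℝ}
    {M c : ℝ} (hB : ∀ i k, |B i k| ≤ M) (hw : ∀ k, |w k| ≤ c) (i : ι) :
    |(B *ᵥ w) i| ≤ Fintype.card κ * (M * c) := by
  calc |(B *ᵥ w) i| ≤ ∑ k, |B i k| * |w k| := by
        simpa only [Matrix.mulVec, dotProduct, abs_mul] using
          Finset.abs_sum_le_sum_abs (fun k => B i k * w k) Finset.univ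
    _ ≤ ∑ _k : κ, M * c := by
        refine Finset.sum_le_sum fun k _ => ?_
        exact mul_le_mul (hB i k) (hw k) (abs_nonneg _) ((abs_nonneg _).trans (hB i k))
    _ = Fintype.card κ * (M * c) := by simp

theorem Matrix.sum_smul_mulVec_col_eq_zero {R ι κ μ : Type*} [CommRing R] [Fintype κ]
    [Fintype μ] (B : Matrix ι κ R) {A : Matrix κ μ R} {r : μ → R} (hr : A *ᵥ r = 0) :
    ∑ j, r j • B *ᵥ (fun k => A k j) = 0 := by
  calc ∑ j, r j • B *ᵥ (fun k => A k j) = B *ᵥ (A *ᵥ r) := by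
        ext i
        simp only [Finset.sum_apply, Pi.smul_apply, mulVec, dotProduct, smul_eq_mul,
          Finset.mul_sum]
        rw [Finset.sum_comm]
        exact Finset.sum_congr rfl fun k _ => Finset.sum_congr rfl fun j _ => by ring
    _ = 0 := by rw [hr, mulVec_zero]

theorem norm_sum_smul_sub_le {ι E : Type*} [Fintype ι] [SeminormedAddCommGroup E]
    [NormedSpace ℝ E] {r : ι → ℝ} {y x z : ι → E} (hz : ∑ j, r j • z j = 0) :
    ‖∑ j, r j • (y j - x j)‖ ≤ ‖∑ j, r j • x j‖ + ∑ j, |r j| * ‖y j - z j‖ := by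
  have hsplit : ∑ j, r j • (y j - x j) = ∑ j, r j • (y j - z j) - ∑ j, r j • x j := by
    simp only [smul_sub, Finset.sum_sub_distrib, hz, sub_zero]
  calc ‖∑ j, r j • (y j - x j)‖ ≤ ‖∑ j, r j • (y j - z j)‖ + ‖∑ j, r j • x j‖ := by
        rw [hsplit]; exact norm_sub_le _ _
    _ ≤ ‖∑ j, r j • x j‖ + ∑ j, |r j| * ‖y j - z j‖ := by
        rw [add_comm]
        gcongr
        exact (norm_sum_le _ _).trans_eq (by simp only [norm_smul, Real.norm_eq_abs])

theorem euclNorm_sum_smul_sub_le {ι : Type*} [Fintype ι] {n : ℕ} {r : ι → ℝ}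
    {y x z : ι → Fin n → ℝ} (hz : ∑ j, r j • z j = 0) :
    euclNorm (∑ j, r j • (y j - x j)) ≤
      euclNorm (∑ j, r j • x j) + ∑ j, |r j| * euclNorm (y j - z j) := by
  have hz' : ∑ j, r j • WithLp.toLp 2 (z j) = 0 := by
    simpa only [WithLp.toLp_sum, WithLp.toLp_smul, WithLp.toLp_zero] using
      congrArg (WithLp.toLp 2) hz
  simpa only [euclNorm_eq_norm_toLp, WithLp.toLp_sum, WithLp.toLp_smul, WithLp.toLp_sub] using
    norm_sum_smul_sub_le hz'

theorem euclNorm_mulVec_sub_floor_le {n : ℕ} {B : Matrix (Fin n) (Fin n) ℝ} {M q : ℝ}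
    (hB : ∀ i k, |B i k| ≤ M) (hq : 0 < q) (t : Fin n → ℝ) :
    euclNorm (B *ᵥ t - q⁻¹ • B *ᵥ fun i => (⌊q * t i⌋ : ℝ)) ≤ √n * (n * (M * q⁻¹)) := by
  have hsub : B *ᵥ t - q⁻¹ • B *ᵥ (fun i => (⌊q * t i⌋ : ℝ)) =
      B *ᵥ fun i => t i - ⌊q * t i⌋ / q := by
    rw [← mulVec_smul, ← mulVec_sub]
    congr 1; ext i; simp [div_eq_inv_mul]
  rw [hsub]
  refine euclNorm_le_sqrt_mul fun i => ?_
  simpa using B.abs_mulVec_apply_le hB (fun k => abs_sub_floor_mul_div_le hq (t k)) i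

theorem mul_mul_sqrt_mul_div_le_sqrt_mul {n m M Q : ℝ} (hn : 0 ≤ n) (hm : 0 ≤ m) (hQ : 0 < Q)
    (h : n * √m * M ≤ Q) : m * (n * √n) * M / Q ≤ √(n * m) := by
  rw [div_le_iff₀ hQ]
  calc m * (n * √n) * M = √(n * m) * (n * √m * M) := by
        rw [Real.sqrt_mul hn]; linear_combination (-n * M * √n) * Real.mul_self_sqrt hm
    _ ≤ √(n * m) * Q := by gcongr

theorem short_vector_norm_bound_general (n m Q M : ℕ)
    (hm : 0 < m) (hQ : 0 < Q)
    (hQbig : (n : ℝ) * Real.sqrt m * (M : ℝ) ≤ (Q : ℝ))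
    (B : Matrix (Fin n) (Fin n) ℤ)
    (hBdet : IsUnit (B.map (Int.cast : ℤ → ℝ)).det)
    (hB : ∀ i j, |B i j| ≤ (M : ℤ))
    (y : Fin m → Fin n → ℝ)
    (hy : ∀ j, ∃ t : Fin n → ℝ, (∀ i, t i ∈ Set.Ico (0 : ℝ) 1) ∧
      y j = (B.map (Int.cast : ℤ → ℝ)).mulVec t)
    (a : Fin m → Fin n → ℤ)
    (ha : ∀ j i, a j i = ⌊(Q : ℝ) * ((B.map (Int.cast : ℤ → ℝ))⁻¹.mulVec (y j)) i⌋)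
    (A : Matrix (Fin n) (Fin m) ℤ) (hA : ∀ i j, A i j = a j i)
    (r : Fin m → ℤ) (hr : A.mulVec r = 0)
    (β : ℝ) (hβ : ∀ j, |(r j : ℝ)| ≤ β)
    (x : Fin m → Fin n → ℝ)
    (z : Fin m → Fin n → ℝ)
    (hz : ∀ j, z j = ((Q : ℝ))⁻¹ •
      (B.map (Int.cast : ℤ → ℝ)).mulVec (fun i => (a j i : ℝ))) :
    (∑ j, (r j : ℝ) • z j) = 0 ∧
    euclNorm (∑ j, (r j : ℝ) • (y j - x j))
      ≤ euclNorm (∑ j, (r j : ℝ) • x j)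
        + β * (m : ℝ) * ((n : ℝ) * Real.sqrt n) * (M : ℝ) / (Q : ℝ) ∧
    euclNorm (∑ j, (r j : ℝ) • x j)
        + β * (m : ℝ) * ((n : ℝ) * Real.sqrt n) * (M : ℝ) / (Q : ℝ)
      ≤ euclNorm (∑ j, (r j : ℝ) • x j) + β * Real.sqrt ((n : ℝ) * (m : ℝ)) := by
  set Bℝ := B.map (Int.cast : ℤ → ℝ)
  have hQℝ : (0 : ℝ) < Q := Nat.cast_pos.mpr hQ
  have hcancel : ∑ j, (r j : ℝ) • z j = 0 := by
    have hrℝ : A.map (Int.cast : ℤ → ℝ) *ᵥ (fun j => (r j : ℝ)) = 0 := by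
      ext i
      simpa [hr, Function.comp_def] using ((Int.castRingHom ℝ).map_mulVec A r i).symm
    simp only [hz, smul_comm _ (Q : ℝ)⁻¹, ← Finset.smul_sum]
    simpa [hA] using congrArg ((Q : ℝ)⁻¹ • ·) (Bℝ.sum_smul_mulVec_col_eq_zero hrℝ)
  have hround : ∀ j, euclNorm (y j - z j) ≤ √n * (n * (M * (Q : ℝ)⁻¹)) := by
    intro j
    obtain ⟨t, -, hyt⟩ := hy j
    have hat : (fun i => (a j i : ℝ)) = fun i => (⌊Q * t i⌋ : ℝ) := by
      ext i; rw [ha, hyt, mulVec_mulVec, nonsing_inv_mul _ hBdet, one_mulVec]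
    rw [hyt, hz, hat]
    exact euclNorm_mulVec_sub_floor_le (fun i k => show |(B i k : ℝ)| ≤ M by exact_mod_cast hB i k) hQℝ t
  have hβ0 : 0 ≤ β := (abs_nonneg _).trans (hβ ⟨0, hm⟩)
  refine ⟨hcancel, ?_, ?_⟩
  · calc euclNorm (∑ j, (r j : ℝ) • (y j - x j))
        ≤ euclNorm (∑ j, (r j : ℝ) • x j) + ∑ j, |(r j : ℝ)| * euclNorm (y j - z j) :=
          euclNorm_sum_smul_sub_le hcancel
      _ ≤ euclNorm (∑ j, (r j : ℝ) • x j) + ∑ _j : Fin m, β * (√n * (n * (M * (Q : ℝ)⁻¹))) := by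
          refine add_le_add_right (Finset.sum_le_sum fun j _ => ?_) _
          exact mul_le_mul (hβ j) (hround j) (Real.sqrt_nonneg _) hβ0
      _ = _ := by simp only [Finset.sum_const, Finset.card_univ, Fintype.card_fin, nsmul_eq_mul]; ring
  · have h := mul_mul_sqrt_mul_div_le_sqrt_mul (Nat.cast_nonneg n) (Nat.cast_nonneg m) hQℝ hQbig
    rw [show β * m * (n * √n) * M / Q = β * (m * (n * √n) * M / Q) by ring]
    gcongr

/-- the key norm bound in the Short Vectors algorithm.
With `Q ≥ n√m·M`, `B` an invertible integer matrix with entries bounded by `M`,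
`y_j ∈ P(B)`, `a_j = ⌊Q B⁻¹ y_j⌋`, `A` the matrix with columns `a_j`,
`A r = 0`, `max_j |r_j| ≤ β`, `v = Σ_j r_j (y_j - x_j)` and
`z_j = (1/Q) B a_j`, one has `Σ_j r_j z_j = 0` and
`‖v‖ ≤ ‖Σ_j r_j x_j‖ + β·m·n√n·M/Q ≤ ‖Σ_j r_j x_j‖ + β√(nm)`. -/
theorem short_vector_norm_bound (n m Q M : ℕ)
    (hn : 0 < n) (hm : 0 < m) (hQ : 0 < Q) (hM : 0 < M)
    (hQbig : (n : ℝ) * Real.sqrt m * (M : ℝ) ≤ (Q : ℝ))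
    (B : Matrix (Fin n) (Fin n) ℤ)
    (hBdet : IsUnit (B.map (Int.cast : ℤ → ℝ)).det)
    (hB : ∀ i j, |B i j| ≤ (M : ℤ))
    (y : Fin m → Fin n → ℝ)
    (hy : ∀ j, ∃ t : Fin n → ℝ, (∀ i, t i ∈ Set.Ico (0 : ℝ) 1) ∧
      y j = (B.map (Int.cast : ℤ → ℝ)).mulVec t)
    (a : Fin m → Fin n → ℤ)
    (ha : ∀ j i, a j i = ⌊(Q : ℝ) * ((B.map (Int.cast : ℤ → ℝ))⁻¹.mulVec (y j)) i⌋)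
    (A : Matrix (Fin n) (Fin m) ℤ) (hA : ∀ i j, A i j = a j i)
    (r : Fin m → ℤ) (hr : A.mulVec r = 0)
    (β : ℝ) (hβ : ∀ j, |(r j : ℝ)| ≤ β)
    (x : Fin m → Fin n → ℝ)
    (z : Fin m → Fin n → ℝ)
    (hz : ∀ j, z j = ((Q : ℝ))⁻¹ •
      (B.map (Int.cast : ℤ → ℝ)).mulVec (fun i => (a j i : ℝ))) :
    (∑ j, (r j : ℝ) • z j) = 0 ∧
    euclNorm (∑ j, (r j : ℝ) • (y j - x j))
      ≤ euclNorm (∑ j, (r j : ℝ) • x j)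
        + β * (m : ℝ) * ((n : ℝ) * Real.sqrt n) * (M : ℝ) / (Q : ℝ) ∧
    euclNorm (∑ j, (r j : ℝ) • x j)
        + β * (m : ℝ) * ((n : ℝ) * Real.sqrt n) * (M : ℝ) / (Q : ℝ)
      ≤ euclNorm (∑ j, (r j : ℝ) • x j) + β * Real.sqrt ((n : ℝ) * (m : ℝ)) :=
  short_vector_norm_bound_general n m Q M hm hQ hQbig B hBdet hB y hy a ha A hA r hr β hβ x z hz
end
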